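/- arXiv:2605.10140 — 9 statements merged into one kernel-verified Lean document; each statement's English description precedes it below -/
import Mathlib

section
/- For all real numbers A, B with 0 ≤ A ≤ 1 and 0 ≤ B ≤ 1, one has (2 + A·B − A²)(2 + A·B − B²) − 2(A + B) ≥ 0. -/
theorem stmt_0 (A B : ℝ) (hA0 : 0 ≤ A) (hA1 : A ≤ 1) (hB0 : 0 ≤ B) (hB1 : B ≤ 1) :
    (2 + A * B - A ^ 2) * (2 + A * B - B ^ 2) - 2 * (A + B) ≥ 0 := by
  nlinarith [sq_nonneg (A-B), sq_nonneg (A+B), sq_nonneg (A*B), mul_nonneg hA0 hB0, sq_nonneg (1-A), sq_nonneg (1-B), sq_nonneg (A+B-2), mul_nonneg (mul_nonneg hA0 hB0) (sq_nonneg (A-B)), mul_nonneg (sub_nonneg.2 hA1) (sub_nonneg.2 hB1), sq_nonneg (A*B-1), mul_nonneg (mul_nonneg (sub_nonneg.2 hA1) (sub_nonneg.2 hB1)) (mul_nonneg hA0 hB0)]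
end

section
/- Let 0 ≤ A ≤ 1 and 0 ≤ B ≤ 1, and set C = 2 + A·B − A². Then C·[2(C − A − B) + (A + B)(1 − A·B)/2] − (5/2)(1 − A²)(1 + A·B) ≥ 0. -/
theorem stmt_1 (A B : ℝ) (hA0 : 0 ≤ A) (hA1 : A ≤ 1) (hB0 : 0 ≤ B) (hB1 : B ≤ 1)
    (C : ℝ) (hC : C = 2 + A * B - A ^ 2) :
    C * (2 * (C - A - B) + (A + B) * (1 - A * B) / 2)
      - 5 / 2 * (1 - A ^ 2) * (1 + A * B) ≥ 0 := by
  subst hC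
  nlinarith [sq_nonneg (A-B), sq_nonneg (A+B), sq_nonneg (1-A), sq_nonneg (1-B), sq_nonneg (A*B), mul_nonneg hA0 hB0, sq_nonneg (1-A*B), mul_nonneg (mul_nonneg hA0 hB0) (sub_nonneg.2 hA1), mul_nonneg (sub_nonneg.2 hA1) (sub_nonneg.2 hB1), sq_nonneg (A-1), sq_nonneg (A*B-1), sq_nonneg (A^2-B), mul_nonneg (mul_nonneg hA0 hA0) hB0]
end

section
/- For real numbers A, B ∈ [0,1] with κ = √(1 − A²) and ε = √(1 − B²), the identity 4(1 + A·B) − (A + B + B·κ + A·ε)² = (κ·ε + κ + ε − 1 − A·B)² holds. In particular A + B + B·κ + A·ε ≤ 2·√(1 + A·B). -/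
theorem stmt_2 (A B : ℝ) (hA0 : 0 ≤ A) (hA1 : A ≤ 1) (hB0 : 0 ≤ B) (hB1 : B ≤ 1)
    (κ ε : ℝ) (hκ : κ = Real.sqrt (1 - A ^ 2)) (hε : ε = Real.sqrt (1 - B ^ 2)) :
    4 * (1 + A * B) - (A + B + B * κ + A * ε) ^ 2
        = (κ * ε + κ + ε - 1 - A * B) ^ 2 ∧
    A + B + B * κ + A * ε ≤ 2 * Real.sqrt (1 + A * B) := by
  have hA2 : A ^ 2 ≤ 1 := by nlinarith
  have hB2 : B ^ 2 ≤ 1 := by nlinarith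
  have hκ0 : 0 ≤ κ := hκ ▸ Real.sqrt_nonneg _
  have hε0 : 0 ≤ ε := hε ▸ Real.sqrt_nonneg _
  have hκ2 : κ ^ 2 = 1 - A ^ 2 := by
    rw [hκ, Real.sq_sqrt (by linarith)]
  have hε2 : ε ^ 2 = 1 - B ^ 2 := by
    rw [hε, Real.sq_sqrt (by linarith)]
  have hid : 4 * (1 + A * B) - (A + B + B * κ + A * ε) ^ 2
      = (κ * ε + κ + ε - 1 - A * B) ^ 2 := by nlinarith [sq_nonneg κ, sq_nonneg ε]
  refine ⟨hid, ?_⟩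
  have h1 : (A + B + B * κ + A * ε) ^ 2 ≤ (2 * Real.sqrt (1 + A * B)) ^ 2 := by
    have : (2 * Real.sqrt (1 + A * B)) ^ 2 = 4 * (1 + A * B) := by
      rw [mul_pow, Real.sq_sqrt (by nlinarith)]; ring
    nlinarith [sq_nonneg (κ * ε + κ + ε - 1 - A * B)]
  have h2 : 0 ≤ 2 * Real.sqrt (1 + A * B) := by positivity
  have h3 : 0 ≤ A + B + B * κ + A * ε := by positivity
  nlinarith [h1, h2, h3]
end

section
/- Let 0 < A ≤ 1, 0 < B ≤ 1, κ = √(1−A²), ε = √(1−B²). Then L(A,B) ≤ 1/2 holds if and only if L(B,A) ≤ 1/2, where L(A,B) = (κ/(1+κ))·(1+A·B)/(B·(A+B)) and L(B,A) = (ε/(1+ε))·(1+A·B)/(A·(A+B)). -/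
lemma key_aux (A B κ : ℝ) (hA0 : 0 < A) (hA1 : A ≤ 1) (hB0 : 0 < B) (hB1 : B ≤ 1)
    (hκ : κ = Real.sqrt (1 - A ^ 2)) :
    κ / (1 + κ) * ((1 + A * B) / (B * (A + B))) ≤ 1 / 2 ↔
      (1 - A ^ 2) * (2 + A * B - B ^ 2) ^ 2 ≤ B ^ 2 * (A + B) ^ 2 := by
  have hκ0 : 0 ≤ κ := hκ ▸ Real.sqrt_nonneg _
  have hκ2 : κ ^ 2 = 1 - A ^ 2 := by
    rw [hκ]; exact Real.sq_sqrt (by nlinarith)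
  have h1κ : (0:ℝ) < 1 + κ := by linarith
  have hBA : 0 < B * (A + B) := by positivity
  have hX : 0 < 2 + A * B - B ^ 2 := by nlinarith
  rw [div_mul_div_comm, div_le_div_iff₀ (by positivity) (by norm_num : (0:ℝ) < 2)]
  have hre : κ * (1 + A * B) * 2 - (1 + κ) * (B * (A + B)) * 1
      = κ * (2 + A * B - B ^ 2) - B * (A + B) := by ring
  constructor
  · intro h
    have h2 : κ * (2 + A * B - B ^ 2) ≤ B * (A + B) := by linarith
    have hs := mul_self_le_mul_self (mul_nonneg hκ0 hX.le) h2
    nlinarith [hs, hκ2, sq_nonneg (2 + A * B - B ^ 2)]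
  · intro h
    have hs : (κ * (2 + A * B - B ^ 2)) * (κ * (2 + A * B - B ^ 2))
        ≤ (B * (A + B)) * (B * (A + B)) := by nlinarith [hκ2]
    have h2 : κ * (2 + A * B - B ^ 2) ≤ B * (A + B) := by
      nlinarith [hs, mul_nonneg hκ0 hX.le, hBA]
    linarith

theorem stmt_5 (A B : ℝ) (hA0 : 0 < A) (hA1 : A ≤ 1) (hB0 : 0 < B) (hB1 : B ≤ 1)
    (κ ε : ℝ) (hκ : κ = Real.sqrt (1 - A ^ 2)) (hε : ε = Real.sqrt (1 - B ^ 2)) :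
    κ / (1 + κ) * ((1 + A * B) / (B * (A + B))) ≤ 1 / 2 ↔
      ε / (1 + ε) * ((1 + A * B) / (A * (A + B))) ≤ 1 / 2 := by
  have h1 := key_aux A B κ hA0 hA1 hB0 hB1 hκ
  have h2 := key_aux B A ε hB0 hB1 hA0 hA1 hε
  have comm : ε / (1 + ε) * ((1 + A * B) / (A * (A + B)))
      = ε / (1 + ε) * ((1 + B * A) / (A * (B + A))) := by ring_nf
  rw [h1, comm, h2]
  have hid : (1 - A ^ 2) * (2 + A * B - B ^ 2) ^ 2 - B ^ 2 * (A + B) ^ 2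
      = (1 - B ^ 2) * (2 + B * A - A ^ 2) ^ 2 - A ^ 2 * (B + A) ^ 2 := by ring
  constructor <;> intro h <;> linarith
end

section
/- Let 0 < A ≤ 1, 0 < B ≤ 1, κ = √(1−A²), ε = √(1−B²). Suppose U ∈ [0,1] satisfies 0 ≤ M(U) ≤ 1/2 and 0 ≤ N(U) ≤ 1/2, where M(U) = κ·((1+A·B)/(B·(A+B)) − U) and N(U) = ε·(U + κ²/(A·(A+B))). Then (A+B)·sin(π·U) + B·κ·sin(π·M(U)) + A·ε·sin(π·N(U)) ≥ 0, with strict positivity whenever 0 < U < 1. -/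
open Real in
theorem stmt_10 (A B : ℝ) (hA0 : 0 < A) (hA1 : A ≤ 1) (hB0 : 0 < B) (hB1 : B ≤ 1)
    (κ ε : ℝ) (hκ : κ = Real.sqrt (1 - A ^ 2)) (hε : ε = Real.sqrt (1 - B ^ 2))
    (U : ℝ) (hU0 : 0 ≤ U) (hU1 : U ≤ 1)
    (M N : ℝ)
    (hM : M = κ * ((1 + A * B) / (B * (A + B)) - U))
    (hN : N = ε * (U + κ ^ 2 / (A * (A + B))))
    (hM0 : 0 ≤ M) (hM2 : M ≤ 1 / 2) (hN0 : 0 ≤ N) (hN2 : N ≤ 1 / 2) :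
    0 ≤ (A + B) * Real.sin (π * U) + B * κ * Real.sin (π * M)
        + A * ε * Real.sin (π * N) ∧
    (0 < U → U < 1 →
      0 < (A + B) * Real.sin (π * U) + B * κ * Real.sin (π * M)
          + A * ε * Real.sin (π * N)) := by
  have hπ := Real.pi_pos
  have hκ0 : 0 ≤ κ := hκ ▸ Real.sqrt_nonneg _
  have hε0 : 0 ≤ ε := hε ▸ Real.sqrt_nonneg _
  have hsU : 0 ≤ Real.sin (π * U) := by
    apply Real.sin_nonneg_of_nonneg_of_le_pi (by positivity)
    nlinarith
  have hsM : 0 ≤ Real.sin (π * M) := by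
    apply Real.sin_nonneg_of_nonneg_of_le_pi (by positivity)
    nlinarith
  have hsN : 0 ≤ Real.sin (π * N) := by
    apply Real.sin_nonneg_of_nonneg_of_le_pi (by positivity)
    nlinarith
  constructor
  · have h1 : 0 ≤ (A + B) * Real.sin (π * U) := by positivity
    have h2 : 0 ≤ B * κ * Real.sin (π * M) := by positivity
    have h3 : 0 ≤ A * ε * Real.sin (π * N) := by positivity
    linarith
  · intro h0 h1
    have : 0 < Real.sin (π * U) := by
      apply Real.sin_pos_of_pos_of_lt_pi (by positivity)
      nlinarith
    have h2 : 0 ≤ B * κ * Real.sin (π * M) := by positivity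
    have h3 : 0 ≤ A * ε * Real.sin (π * N) := by positivity
    nlinarith
end

section
/- If α₁, …, α_N ≥ 0 are real numbers with α₁ + ⋯ + α_N ≤ π, then Σ_{n=1}^{N} sin²(α_n/2) ≤ 1. -/
open Real

lemma two_term (a b : ℝ) (ha : 0 ≤ a) (hb : 0 ≤ b) (hab : a + b ≤ π) :
    sin (a / 2) ^ 2 + sin (b / 2) ^ 2 ≤ sin ((a + b) / 2) ^ 2 := by
  have h1 : sin (a/2) ≥ 0 := sin_nonneg_of_nonneg_of_le_pi (by linarith) (by nlinarith [pi_pos])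
  have h2 : sin (b/2) ≥ 0 := sin_nonneg_of_nonneg_of_le_pi (by linarith) (by nlinarith [pi_pos])
  have h3 : cos ((a+b)/2) ≥ 0 := cos_nonneg_of_mem_Icc ⟨by nlinarith [pi_pos], by linarith⟩
  have key : (0:ℝ) ≤ sin (a/2) * sin (b/2) * cos ((a+b)/2) := by positivity
  have e : cos ((a+b)/2) = cos (a/2) * cos (b/2) - sin (a/2) * sin (b/2) := by
    rw [show (a+b)/2 = a/2 + b/2 by ring, cos_add]
  have p1 := sin_sq_add_cos_sq (a/2)
  have p2 := sin_sq_add_cos_sq (b/2)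
  have s : sin ((a+b)/2) = sin (a/2) * cos (b/2) + cos (a/2) * sin (b/2) := by
    rw [show (a+b)/2 = a/2 + b/2 by ring, sin_add]
  have id : sin ((a+b)/2) ^ 2 - sin (a/2) ^ 2 - sin (b/2) ^ 2
      = 2 * (sin (a/2) * sin (b/2) * cos ((a+b)/2)) := by
    rw [s, e]
    linear_combination sin (a/2)^2 * p2 + sin (b/2)^2 * p1
  linarith [key]

lemma main_aux (N : ℕ) (α : Fin N → ℝ) (hα : ∀ n, 0 ≤ α n)
    (hsum : ∑ n, α n ≤ π) :
    ∑ n, Real.sin (α n / 2) ^ 2 ≤ Real.sin ((∑ n, α n) / 2) ^ 2 := by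
  induction N with
  | zero => simp
  | succ n ih =>
    rw [Fin.sum_univ_succ, Fin.sum_univ_succ] at *
    have htail : ∀ i, 0 ≤ (α ∘ Fin.succ) i := fun i => hα _
    have hts : ∑ i, α (Fin.succ i) ≤ π := by
      have := hα 0; linarith
    have := ih (α ∘ Fin.succ) htail (by simpa using hts)
    simp only [Function.comp] at this
    have h2 := two_term (α 0) (∑ i, α (Fin.succ i)) (hα 0)
      (Finset.sum_nonneg fun i _ => hα _) hsum
    calc sin (α 0 / 2) ^ 2 + ∑ i, sin (α (Fin.succ i) / 2) ^ 2
        ≤ sin (α 0 / 2) ^ 2 + sin ((∑ i, α (Fin.succ i)) / 2) ^ 2 := by linarith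
      _ ≤ _ := h2

open Real in
theorem stmt_12 (N : ℕ) (α : Fin N → ℝ) (hα : ∀ n, 0 ≤ α n)
    (hsum : ∑ n, α n ≤ π) :
    ∑ n, Real.sin (α n / 2) ^ 2 ≤ 1 := by
  calc ∑ n, Real.sin (α n / 2) ^ 2 ≤ Real.sin ((∑ n, α n) / 2) ^ 2 :=
        main_aux N α hα hsum
    _ ≤ 1 := by nlinarith [neg_one_le_sin ((∑ n, α n)/2), sin_le_one ((∑ n, α n)/2)]
end

section
/- If α, β ≥ 0 are real numbers with α + β ≤ π, then sin²(α/2) + sin²(β/2) ≤ sin²((α+β)/2). -/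
open Real in
theorem stmt_13 (α β : ℝ) (hα : 0 ≤ α) (hβ : 0 ≤ β) (hsum : α + β ≤ π) :
    Real.sin (α / 2) ^ 2 + Real.sin (β / 2) ^ 2 ≤ Real.sin ((α + β) / 2) ^ 2 := by
  have pi_pos := Real.pi_pos
  have h1 : Real.sin ((α + β) / 2)
      = Real.sin (α/2) * Real.cos (β/2) + Real.cos (α/2) * Real.sin (β/2) := by
    rw [show (α + β)/2 = α/2 + β/2 by ring, Real.sin_add]
  have hsa : 0 ≤ Real.sin (α/2) :=
    Real.sin_nonneg_of_nonneg_of_le_pi (by linarith) (by linarith)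
  have hsb : 0 ≤ Real.sin (β/2) :=
    Real.sin_nonneg_of_nonneg_of_le_pi (by linarith) (by linarith)
  have hc : 0 ≤ Real.cos (α/2 + β/2) :=
    Real.cos_nonneg_of_mem_Icc ⟨by linarith, by linarith⟩
  rw [Real.cos_add] at hc
  rw [h1]
  nlinarith [mul_nonneg (mul_nonneg hsa hsb) hc, Real.sin_sq_add_cos_sq (α/2), Real.sin_sq_add_cos_sq (β/2)]
end

section
/- Let 0 < A ≤ 1, 0 < B ≤ 1 with A·B < 1, σ = √(2(1+A·B)) and C = 2 + A·B − A². Then 2·C − (A+B)·σ ≥ 2·(C − A − B) + ((A+B)/2)·(1 − A·B). Moreover, C·[2(C − A − B) + ((A+B)/2)(1 − A·B)] − (π²/4)·(1−A²)·(1+A·B) ≥ 0, and consequently 2·C² − C·(A+B)·σ − (π²/4)·(1−A²)·(1+A·B) ≥ 0. -/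
set_option maxHeartbeats 1600000 in
open Real in
theorem stmt_17 (A B : ℝ) (hA0 : 0 < A) (hA1 : A ≤ 1) (hB0 : 0 < B) (hB1 : B ≤ 1)
    (hAB : A * B < 1)
    (σ C : ℝ) (hσ : σ = Real.sqrt (2 * (1 + A * B))) (hC : C = 2 + A * B - A ^ 2) :
    2 * C - (A + B) * σ ≥ 2 * (C - A - B) + (A + B) / 2 * (1 - A * B) ∧
    C * (2 * (C - A - B) + (A + B) / 2 * (1 - A * B))
      - π ^ 2 / 4 * (1 - A ^ 2) * (1 + A * B) ≥ 0 ∧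
    2 * C ^ 2 - C * (A + B) * σ - π ^ 2 / 4 * (1 - A ^ 2) * (1 + A * B) ≥ 0 := by
  have hσ0 : 0 ≤ σ := hσ ▸ Real.sqrt_nonneg _
  have hσsq : σ ^ 2 = 2 * (1 + A * B) := by
    rw [hσ, Real.sq_sqrt]; nlinarith
  have hσ2 : σ ≤ 2 := by nlinarith
  have hkey : 2 - σ ≥ (1 - A * B) / 2 := by nlinarith
  have hC0 : 0 < C := by nlinarith
  have h1 : 2 * C - (A + B) * σ ≥ 2 * (C - A - B) + (A + B) / 2 * (1 - A * B) := by
    nlinarith [mul_le_mul_of_nonneg_left hkey (by positivity : (0:ℝ) ≤ A + B)]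
  have hA1' : 0 ≤ 1 - A := by linarith
  have hB1' : 0 ≤ 1 - B := by linarith
  have hZ : C * (2 * (C - A - B) + (A + B) / 2 * (1 - A * B))
      - 5 / 2 * (1 - A ^ 2) * (1 + A * B) ≥ 0 := by
    have hid : C * (2 * (C - A - B) + (A + B) / 2 * (1 - A * B))
        - 5 / 2 * (1 - A ^ 2) * (1 + A * B) =
      (11/2:ℝ) * (1-A)^4 * (1-B)^3 +
      (27/2:ℝ) * (1-A)^4 * B^1 * (1-B)^2 +
      (21/2:ℝ) * (1-A)^4 * B^2 * (1-B)^1 +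
      (5/2:ℝ) * (1-A)^4 * B^3 +
      (19/1:ℝ) * A^1 * (1-A)^3 * (1-B)^3 +
      (101/2:ℝ) * A^1 * (1-A)^3 * B^1 * (1-B)^2 +
      (83/2:ℝ) * A^1 * (1-A)^3 * B^2 * (1-B)^1 +
      (10/1:ℝ) * A^1 * (1-A)^3 * B^3 +
      (37/2:ℝ) * A^2 * (1-A)^2 * (1-B)^3 +
      (53/1:ℝ) * A^2 * (1-A)^2 * B^1 * (1-B)^2 +
      (45/1:ℝ) * A^2 * (1-A)^2 * B^2 * (1-B)^1 +
      (10/1:ℝ) * A^2 * (1-A)^2 * B^3 +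
      (7/2:ℝ) * A^3 * (1-A)^1 * (1-B)^3 +
      (23/2:ℝ) * A^3 * (1-A)^1 * B^1 * (1-B)^2 +
      (9/1:ℝ) * A^3 * (1-A)^1 * B^2 * (1-B)^1 +
      (1/2:ℝ) * A^4 * (1-B)^3 +
      (2/1:ℝ) * A^4 * B^1 * (1-B)^2 +
      (2/1:ℝ) * A^4 * B^2 * (1-B)^1 := by rw [hC]; ring
    rw [hid]
    positivity
  have hpi : π ^ 2 < 10 := by
    nlinarith [Real.pi_lt_d2, Real.pi_pos]
  have h2 : C * (2 * (C - A - B) + (A + B) / 2 * (1 - A * B))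
      - π ^ 2 / 4 * (1 - A ^ 2) * (1 + A * B) ≥ 0 := by
    nlinarith [mul_nonneg (mul_nonneg (by nlinarith : (0:ℝ) ≤ 1 - A ^ 2)
      (by nlinarith : (0:ℝ) ≤ 1 + A * B)) (by nlinarith : (0:ℝ) ≤ 10 - π ^ 2)]
  refine ⟨h1, h2, ?_⟩
  nlinarith [mul_le_mul_of_nonneg_left h1 hC0.le]
end

section
/- Let 0 < A ≤ 1 and 0 < B ≤ 1, σ = √(2(1+A·B)), C = 2 + A·B − A². Then σ·(A+B) ≤ C·(2 + A·B − B²), and consequently σ/(2·B·C) ≤ (2 + A·B − B²)/(2·B·(A+B)), i.e. the barrier point U₊ = P − σ/(2BC) satisfies U₊ ≥ 1/2, where P = (1+A·B)/(B·(A+B)). -/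
theorem stmt_18 (A B : ℝ) (hA0 : 0 < A) (hA1 : A ≤ 1) (hB0 : 0 < B) (hB1 : B ≤ 1)
    (σ C P : ℝ) (hσ : σ = Real.sqrt (2 * (1 + A * B))) (hC : C = 2 + A * B - A ^ 2)
    (hP : P = (1 + A * B) / (B * (A + B))) :
    σ * (A + B) ≤ C * (2 + A * B - B ^ 2) ∧
    σ / (2 * B * C) ≤ (2 + A * B - B ^ 2) / (2 * B * (A + B)) ∧
    P - σ / (2 * B * C) ≥ 1 / 2 := by
  have hσle : σ ≤ 2 := by
    rw [hσ]
    have : (2 : ℝ) * (1 + A * B) ≤ 4 := by nlinarith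
    calc Real.sqrt (2 * (1 + A * B)) ≤ Real.sqrt 4 := Real.sqrt_le_sqrt this
      _ = 2 := by
        rw [show (4:ℝ) = 2^2 by norm_num, Real.sqrt_sq (by norm_num)]
  have hσ0 : 0 ≤ σ := hσ ▸ Real.sqrt_nonneg _
  have hCpos : 0 < C := by nlinarith
  have hAB : 0 < A + B := by linarith
  have key : 2 * (A + B) ≤ (2 + A * B - A ^ 2) * (2 + A * B - B ^ 2) := by
    nlinarith [mul_nonneg (sub_nonneg.2 hA1) (sub_nonneg.2 hB1), sq_nonneg (A - B), sq_nonneg (A + B - 2), sq_nonneg (A*B - 1), mul_pos hA0 hB0, sq_nonneg (A*B), mul_nonneg (mul_nonneg (sub_nonneg.2 hA1) (sub_nonneg.2 hB1)) (mul_pos hA0 hB0).le]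
  have h1 : σ * (A + B) ≤ C * (2 + A * B - B ^ 2) := by nlinarith
  have h2 : σ / (2 * B * C) ≤ (2 + A * B - B ^ 2) / (2 * B * (A + B)) := by
    rw [div_le_div_iff₀ (by positivity) (by positivity)]
    nlinarith
  refine ⟨h1, h2, ?_⟩
  have hPeq : P - 1 / 2 = (2 + A * B - B ^ 2) / (2 * B * (A + B)) := by
    rw [hP]; field_simp; ring
  linarith [h2, hPeq.ge, hPeq.le]
end
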